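/- Let R be a ring, n a non-negative integer, and M a left R-module. The following are equivalent: (1) M is n-weak injective; (2) for every short exact sequence 0 → M → B → C → 0 of left R-modules and every special super finitely presented left R-module K, the induced map Hom_R(K, B) → Hom_R(K, C) is surjective; (3) for every monomorphism M → E with E an injective left R-module and every special super finitely presented left R-module K, the induced map Hom_R(K, E) → Hom_R(K, E/M) is surjective. -/

import Mathlib

/-! Definitions for `n`-weak injective and `n`-weak flat modules over an arbitrary
(associative, unital, possibly noncommutative) ring `R`, following
Amini–Amzil–Bennis, "On n-weak injective and n-weak flat modules".

Left `R`-modules are types with `[Module R M]`; right `R`-modules are types with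
`[Module Rᵐᵒᵖ M]`.  `Ext` is the derived functor of the ℤ-linear Yoneda functor on
`ModuleCat R`, and `Tor` is obtained as the left derived functor of the balanced
tensor product `N ⊗_R -` (constructed as a quotient of the ℤ-tensor product). -/

open CategoryTheory Limits TensorProduct

noncomputable section

universe u

namespace NWeak

variable (R : Type u) [Ring R]

/-- A left `R`-module `U` is *`n`-super finitely presented* if it admits a resolution
`⋯ → F_{n+1} → F_n → ⋯ → F_1 → F_0 → U → 0` by projective modules in which `F_i` is
finitely generated for every `i ≥ n`. -/
def IsNSuperFP (n : ℕ) (U : Type u) [AddCommGroup U] [Module R U] : Prop :=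
  ∃ (F : ℕ → ModuleCat.{u} R) (d : ∀ i, F (i + 1) ⟶ F i) (ε : F 0 →ₗ[R] U),
    (∀ i, Module.Projective R (F i)) ∧
    (∀ i, n ≤ i → Module.Finite R (F i)) ∧
    Function.Surjective ε ∧
    Function.Exact (d 0) ε ∧
    (∀ i, Function.Exact (d (i + 1)) (d i))

/-- A left `R`-module `K` is *special super finitely presented* (relative to `n`) if
there are an `n`-super finitely presented module `U` and a resolution
`⋯ → F_{n+1} → F_n → ⋯ → F_0 → U → 0` as above such that `K ≅ Im (F_n → F_{n-1})`,
where for `n = 0` we read `K_{-1} := U`. -/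
def IsSpecialSFP (n : ℕ) (K : Type u) [AddCommGroup K] [Module R K] : Prop :=
  ∃ (F : ℕ → ModuleCat.{u} R) (d : ∀ i, F (i + 1) ⟶ F i) (U : ModuleCat.{u} R)
    (ε : F 0 ⟶ U),
    (∀ i, Module.Projective R (F i)) ∧
    (∀ i, n ≤ i → Module.Finite R (F i)) ∧
    Function.Surjective ε ∧
    Function.Exact (d 0) ε ∧
    (∀ i, Function.Exact (d (i + 1)) (d i)) ∧
    (match n with
      | 0 => Nonempty (K ≃ₗ[R] U)
      | m + 1 => Nonempty (K ≃ₗ[R] LinearMap.range (d m).hom))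

/-- Vanishing of `Ext_R^i(K, M)` for left `R`-modules. -/
def extVanish (i : ℕ) (K : Type u) [AddCommGroup K] [Module R K]
    (M : Type u) [AddCommGroup M] [Module R M] : Prop :=
  Subsingleton (((Ext ℤ (ModuleCat.{u} R) i).obj
    (Opposite.op (ModuleCat.of R K))).obj (ModuleCat.of R M))

/-- A left `R`-module `M` is *`n`-weak injective* if `Ext_R^{n+1}(U, M) = 0` for every
`n`-super finitely presented left `R`-module `U`. -/
def IsNWeakInjective (n : ℕ) (M : Type u) [AddCommGroup M] [Module R M] : Prop :=
  ∀ (U : ModuleCat.{u} R), IsNSuperFP R n U → extVanish R (n + 1) U M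

/-- The left `R`-module `M` has *`n`-weak injective dimension at most `k`* if
`Ext_R^{k+1}(K, M) = 0` for every special super finitely presented left `R`-module
`K`. -/
def WIDimLE (n k : ℕ) (M : Type u) [AddCommGroup M] [Module R M] : Prop :=
  ∀ (K : ModuleCat.{u} R), IsSpecialSFP R n K → extVanish R (k + 1) K M

/-! ### The balanced tensor product and Tor -/

/-- The additive subgroup of `N ⊗[ℤ] K` generated by the balancing relations
`(n·r) ⊗ k - n ⊗ (r·k)`. -/
def balRel (N : Type u) [AddCommGroup N] [Module Rᵐᵒᵖ N]
    (K : Type u) [AddCommGroup K] [Module R K] : AddSubgroup (N ⊗[ℤ] K) :=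
  AddSubgroup.closure
    {x | ∃ (a : N) (r : R) (b : K),
      x = (MulOpposite.op r • a) ⊗ₜ[ℤ] b - a ⊗ₜ[ℤ] (r • b)}

/-- The balanced tensor product `N ⊗_R K` of a right `R`-module `N` and a left
`R`-module `K`, realized as a quotient of `N ⊗[ℤ] K`. -/
def RTensor (N : Type u) [AddCommGroup N] [Module Rᵐᵒᵖ N]
    (K : Type u) [AddCommGroup K] [Module R K] : Type u :=
  (N ⊗[ℤ] K) ⧸ balRel R N K

instance (N : Type u) [AddCommGroup N] [Module Rᵐᵒᵖ N]
    (K : Type u) [AddCommGroup K] [Module R K] : AddCommGroup (RTensor R N K) :=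
  inferInstanceAs (AddCommGroup ((N ⊗[ℤ] K) ⧸ balRel R N K))

variable {R}

/-- Functoriality of the balanced tensor product in the left-module variable. -/
def balMapRight (N : Type u) [AddCommGroup N] [Module Rᵐᵒᵖ N]
    {K K' : Type u} [AddCommGroup K] [Module R K] [AddCommGroup K'] [Module R K']
    (f : K →ₗ[R] K') : RTensor R N K →+ RTensor R N K' :=
  QuotientAddGroup.map _ _
    (TensorProduct.map (LinearMap.id : N →ₗ[ℤ] N) (f.restrictScalars ℤ)).toAddMonoidHom
    (by
      rw [balRel, AddSubgroup.closure_le]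
      rintro x ⟨a, r, b, rfl⟩
      simp only [SetLike.mem_coe, AddSubgroup.mem_comap, LinearMap.toAddMonoidHom_coe,
        map_sub, TensorProduct.map_tmul, LinearMap.coe_restrictScalars, LinearMap.id_coe,
        id_eq, LinearMap.map_smul]
      exact AddSubgroup.subset_closure ⟨a, r, f b, rfl⟩)

/-- Functoriality of the balanced tensor product in the right-module variable. -/
def balMapLeft (K : Type u) [AddCommGroup K] [Module R K]
    {N N' : Type u} [AddCommGroup N] [Module Rᵐᵒᵖ N] [AddCommGroup N'] [Module Rᵐᵒᵖ N']
    (g : N →ₗ[Rᵐᵒᵖ] N') : RTensor R N K →+ RTensor R N' K :=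
  QuotientAddGroup.map _ _
    (TensorProduct.map (g.restrictScalars ℤ) (LinearMap.id : K →ₗ[ℤ] K)).toAddMonoidHom
    (by
      rw [balRel, AddSubgroup.closure_le]
      rintro x ⟨a, r, b, rfl⟩
      simp only [SetLike.mem_coe, AddSubgroup.mem_comap, LinearMap.toAddMonoidHom_coe,
        map_sub, TensorProduct.map_tmul, LinearMap.coe_restrictScalars, LinearMap.id_coe,
        id_eq, LinearMap.map_smul]
      exact AddSubgroup.subset_closure ⟨g a, r, b, rfl⟩)

lemma balMapRight_mk (N : Type u) [AddCommGroup N] [Module Rᵐᵒᵖ N]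
    {K K' : Type u} [AddCommGroup K] [Module R K] [AddCommGroup K'] [Module R K']
    (f : K →ₗ[R] K') (y : N ⊗[ℤ] K) :
    balMapRight N f (QuotientAddGroup.mk y)
      = QuotientAddGroup.mk (TensorProduct.map (LinearMap.id : N →ₗ[ℤ] N)
          (f.restrictScalars ℤ) y) := rfl

variable (R)

/-- The functor `K ↦ N ⊗_R K` from left `R`-modules to abelian groups, for a fixed
right `R`-module `N`. -/
def tensorFunctor (N : Type u) [AddCommGroup N] [Module Rᵐᵒᵖ N] :
    ModuleCat.{u} R ⥤ AddCommGrpCat.{u} where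
  obj K := AddCommGrpCat.of (RTensor R N K)
  map {K K'} f := AddCommGrpCat.ofHom (balMapRight N f.hom)
  map_id K := by
    refine AddCommGrpCat.ext fun x => ?_
    refine QuotientAddGroup.induction_on x fun y => ?_
    show balMapRight N (LinearMap.id) (QuotientAddGroup.mk y) = QuotientAddGroup.mk y
    rw [balMapRight_mk]
    congr 1
    refine TensorProduct.induction_on y (by simp) (fun a b => by simp) ?_
    intro s t hs ht
    simp_all [map_add]
  map_comp {K K' K''} f g := by
    refine AddCommGrpCat.ext fun x => ?_
    refine QuotientAddGroup.induction_on x fun y => ?_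
    show balMapRight N (g.hom.comp f.hom) (QuotientAddGroup.mk y)
      = balMapRight N g.hom (balMapRight N f.hom (QuotientAddGroup.mk y))
    rw [balMapRight_mk, balMapRight_mk, balMapRight_mk]
    congr 1
    refine TensorProduct.induction_on y (by simp) (fun a b => by simp) ?_
    intro s t hs ht
    simp_all [map_add]

instance (N : Type u) [AddCommGroup N] [Module Rᵐᵒᵖ N] : (tensorFunctor R N).Additive where
  map_add {K K'} {f g} := by
    refine AddCommGrpCat.ext fun x => ?_
    refine QuotientAddGroup.induction_on x fun y => ?_
    show balMapRight N (f.hom + g.hom) (QuotientAddGroup.mk y)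
      = balMapRight N f.hom (QuotientAddGroup.mk y) + balMapRight N g.hom (QuotientAddGroup.mk y)
    rw [balMapRight_mk, balMapRight_mk, balMapRight_mk]
    refine (congrArg (QuotientAddGroup.mk (s := balRel R N K')) ?_).trans
      (QuotientAddGroup.mk_add _ _ _)
    refine TensorProduct.induction_on y (by simp)
      (fun a b => by
        simp only [TensorProduct.map_tmul, LinearMap.coe_restrictScalars, LinearMap.id_coe, id_eq]
        rw [show (f.hom + g.hom) b = f.hom b + g.hom b from rfl, TensorProduct.tmul_add]) ?_
    intro s t hs ht
    simp_all [map_add]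
    abel

/-- Vanishing of `Tor_i^R(N, K)` for a right `R`-module `N` and a left `R`-module `K`:
the `i`-th left derived functor of `N ⊗_R -` vanishes at `K`. -/
def torVanish (i : ℕ) (N : Type u) [AddCommGroup N] [Module Rᵐᵒᵖ N]
    (K : Type u) [AddCommGroup K] [Module R K] : Prop :=
  Subsingleton (((tensorFunctor R N).leftDerived i).obj (ModuleCat.of R K))

/-- A right `R`-module `N` is *`n`-weak flat* if `Tor^R_{n+1}(N, U) = 0` for every
`n`-super finitely presented left `R`-module `U`. -/
def IsNWeakFlat (n : ℕ) (N : Type u) [AddCommGroup N] [Module Rᵐᵒᵖ N] : Prop :=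
  ∀ (U : ModuleCat.{u} R), IsNSuperFP R n U → torVanish R (n + 1) N U

/-- The right `R`-module `N` has *`n`-weak flat dimension at most `k`* if
`Tor^R_{k+1}(N, K) = 0` for every special super finitely presented left `R`-module
`K`. -/
def WFDimLE (n k : ℕ) (N : Type u) [AddCommGroup N] [Module Rᵐᵒᵖ N] : Prop :=
  ∀ (K : ModuleCat.{u} R), IsSpecialSFP R n K → torVanish R (k + 1) N K

/-! ### Character modules -/

/-- The character module `M⋆ = Hom_ℤ(M, ℚ/ℤ)` of a left `R`-module is a right
`R`-module via `(f · r) (m) = f (r · m)`. -/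
instance charModuleRight (M : Type u) [AddCommGroup M] [Module R M] :
    Module Rᵐᵒᵖ (CharacterModule M) where
  smul ρ f := f.comp (DistribMulAction.toAddMonoidHom M ρ.unop)
  one_smul f := CharacterModule.ext _ fun m => congrArg f (one_smul R m)
  mul_smul ρ σ f := CharacterModule.ext _ fun m => congrArg f (mul_smul σ.unop ρ.unop m)
  smul_zero ρ := CharacterModule.ext _ fun _ => rfl
  smul_add ρ f g := CharacterModule.ext _ fun _ => rfl
  add_smul ρ σ f := CharacterModule.ext _ fun m => by
    show f ((ρ.unop + σ.unop) • m) = f (ρ.unop • m) + f (σ.unop • m)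
    rw [add_smul, map_add]
  zero_smul f := CharacterModule.ext _ fun m => by
    show f ((0 : R) • m) = 0
    rw [zero_smul, map_zero]

/-- The character module `N⋆ = Hom_ℤ(N, ℚ/ℤ)` of a right `R`-module is a left
`R`-module via `(r · f) (m) = f (m · r)`. -/
instance charModuleLeft (N : Type u) [AddCommGroup N] [Module Rᵐᵒᵖ N] :
    Module R (CharacterModule N) where
  smul r f := f.comp (DistribMulAction.toAddMonoidHom N (MulOpposite.op r))
  one_smul f := CharacterModule.ext _ fun m => congrArg f (one_smul Rᵐᵒᵖ m)
  mul_smul r s f := CharacterModule.ext _ fun m => congrArg f (by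
    show (MulOpposite.op (r * s)) • m = (MulOpposite.op s) • (MulOpposite.op r) • m
    rw [← mul_smul, MulOpposite.op_mul])
  smul_zero r := CharacterModule.ext _ fun _ => rfl
  smul_add r f g := CharacterModule.ext _ fun _ => rfl
  add_smul r s f := CharacterModule.ext _ fun m => by
    show f ((MulOpposite.op r + MulOpposite.op s) • m)
      = f ((MulOpposite.op r) • m) + f ((MulOpposite.op s) • m)
    rw [add_smul, map_add]
  zero_smul f := CharacterModule.ext _ fun m => by
    show f ((0 : Rᵐᵒᵖ) • m) = 0
    rw [zero_smul, map_zero]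

/-! ### Purity and flatness -/

/-- A submodule `N` of a left `R`-module `M` is *pure* if for every right `R`-module
`L` the induced map `L ⊗_R N → L ⊗_R M` is injective. -/
def IsPureSubmodule (M : Type u) [AddCommGroup M] [Module R M] (N : Submodule R M) :
    Prop :=
  ∀ (L : Type u) [AddCommGroup L] [Module Rᵐᵒᵖ L],
    Function.Injective (balMapRight L N.subtype)

/-- A submodule `N` of a right `R`-module `M` is *pure* if for every left `R`-module
`L` the induced map `N ⊗_R L → M ⊗_R L` is injective. -/
def IsPureSubmoduleRight (M : Type u) [AddCommGroup M] [Module Rᵐᵒᵖ M]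
    (N : Submodule Rᵐᵒᵖ M) : Prop :=
  ∀ (L : Type u) [AddCommGroup L] [Module R L],
    Function.Injective (balMapLeft L N.subtype)

/-- A left `R`-module `M` is *flat* if tensoring with `M` preserves injectivity of
maps of right `R`-modules. -/
def IsFlatLeft (M : Type u) [AddCommGroup M] [Module R M] : Prop :=
  ∀ (A B : Type u) [AddCommGroup A] [Module Rᵐᵒᵖ A] [AddCommGroup B] [Module Rᵐᵒᵖ B]
    (g : A →ₗ[Rᵐᵒᵖ] B), Function.Injective g → Function.Injective (balMapLeft M g)

/-- The left `R`-module `K` has *projective dimension at most `m`*: there is an exact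
sequence `0 → P_m → ⋯ → P_1 → P_0 → K → 0` with all `P_i` projective (encoded by a
projective resolution vanishing in degrees `> m`). -/
def ProjDimLE (K : Type u) [AddCommGroup K] [Module R K] (m : ℕ) : Prop :=
  ∃ (P : ℕ → ModuleCat.{u} R) (d : ∀ i, P (i + 1) ⟶ P i) (ε : P 0 →ₗ[R] K),
    (∀ i, Module.Projective R (P i)) ∧
    Function.Surjective ε ∧
    Function.Exact (d 0) ε ∧
    (∀ i, Function.Exact (d (i + 1)) (d i)) ∧
    (∀ i, m < i → Subsingleton (P i))

end NWeak

/-! Let `F` be a projective resolution of an `n`-super finitely presented module `U` and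
`K = coker (F_{n+1} → F_n)` the corresponding special super finitely presented module.
Computing `Ext_R^{n+1}(U, M)` with `F`, its vanishing says that every map `F_{n+1} → M` killing
the image of `F_{n+2}` extends along `F_{n+1} → F_n`. Given this, a map `K → C` lifts through
`B → C` in a short exact sequence `0 → M → B → C → 0`: lift `F_n → K → C` to `F_n → B` by
projectivity, restrict to `F_{n+1}`, where it lands in `M`, extend that map to `F_n` and subtract.
Conversely, if maps `K → E/M` lift to `E` for one embedding of `M` into an injective module `E`,
a map `F_{n+1} → M` as above first extends to `F_n → E` by injectivity of `E`, and correcting by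
the lift of the induced map `K → E/M` makes the extension land in `M`. -/

universe v

section LinearAlgebra

variable {R : Type*} [Ring R] {A B C D : Type*} [AddCommGroup A] [Module R A]
  [AddCommGroup B] [Module R B] [AddCommGroup C] [Module R C] [AddCommGroup D] [Module R D]

theorem Function.Exact.exists_desc_of_surjective {f : A →ₗ[R] B} {g : B →ₗ[R] C}
    (hfg : Function.Exact f g) (hg : Function.Surjective g) {q : B →ₗ[R] D}
    (hq : q ∘ₗ f = 0) : ∃ ψ : C →ₗ[R] D, ψ ∘ₗ g = q := by
  have hker : LinearMap.range f ≤ LinearMap.ker q := by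
    rintro _ ⟨a, rfl⟩
    exact LinearMap.congr_fun hq a
  exact ⟨(LinearMap.range f).liftQ q hker ∘ₗ (hfg.linearEquivOfSurjective hg).symm.toLinearMap,
    LinearMap.ext fun b => by simp⟩

theorem Function.Exact.exists_lift_of_injective {f : A →ₗ[R] B} {g : B →ₗ[R] C}
    (hfg : Function.Exact f g) (hf : Function.Injective f) {v : D →ₗ[R] B}
    (hv : g ∘ₗ v = 0) : ∃ w : D →ₗ[R] A, f ∘ₗ w = v := by
  have hrange (x : D) : v x ∈ LinearMap.range f := (hfg _).mp (LinearMap.congr_fun hv x)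
  refine ⟨(LinearEquiv.ofInjective f hf).symm.toLinearMap ∘ₗ v.codRestrict _ hrange,
    LinearMap.ext fun x => ?_⟩
  rw [LinearMap.comp_apply, ← LinearEquiv.ofInjective_apply (h := hf)]
  simp

theorem Module.Injective.exists_comp_eq_of_exact {E : Type v} [AddCommGroup E] [Module R E]
    [Small.{v} R] [Module.Injective R E] {d' : A →ₗ[R] B} {d : B →ₗ[R] C}
    (hd : Function.Exact d' d) {q : B →ₗ[R] E} (hq : q ∘ₗ d' = 0) :
    ∃ u : C →ₗ[R] E, u ∘ₗ d = q := by
  have hd' : Function.Exact d' d.rangeRestrict :=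
    LinearMap.exact_iff.mpr (by rw [LinearMap.ker_rangeRestrict, hd.linearMap_ker_eq])
  obtain ⟨q', hq'⟩ := hd'.exists_desc_of_surjective d.surjective_rangeRestrict hq
  obtain ⟨u, hu⟩ := Module.Injective.extension_property R E _ _ _
    (Submodule.injective_subtype (LinearMap.range d)) q'
  exact ⟨u, by rw [← hq', ← hu]; rfl⟩

end LinearAlgebra

section HomExactness

open LinearMap

variable {R : Type*} [Ring R] {W X P K M B C : Type*} [AddCommGroup W] [Module R W]
  [AddCommGroup X] [Module R X] [AddCommGroup P] [Module R P] [AddCommGroup K] [Module R K]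
  [AddCommGroup M] [Module R M] [AddCommGroup B] [Module R B] [AddCommGroup C] [Module R C]
  {d' : W →ₗ[R] X} {d : X →ₗ[R] P} {p : P →ₗ[R] K}

theorem exists_lift_of_exact_hom [Module.Projective R P] (hdd : d ∘ₗ d' = 0)
    (hp : Function.Surjective p) (hdp : Function.Exact d p)
    (hM : Function.Exact (fun h : P →ₗ[R] M => h ∘ₗ d) (fun t : X →ₗ[R] M => t ∘ₗ d'))
    {f : M →ₗ[R] B} {g : B →ₗ[R] C} (hf : Function.Injective f) (hg : Function.Surjective g)
    (hfg : Function.Exact f g) (φ : K →ₗ[R] C) : ∃ ψ : K →ₗ[R] B, g ∘ₗ ψ = φ := by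
  obtain ⟨ℓ, hℓ⟩ := Module.projective_lifting_property g (φ ∘ₗ p) hg
  have hℓd : g ∘ₗ (ℓ ∘ₗ d) = 0 := by
    rw [← comp_assoc, hℓ, comp_assoc, hdp.linearMap_comp_eq_zero, LinearMap.comp_zero]
  obtain ⟨t, ht⟩ := hfg.exists_lift_of_injective hf hℓd
  have htd : t ∘ₗ d' = 0 := by
    rw [← cancel_left hf, LinearMap.comp_zero, ← comp_assoc, ht, comp_assoc, hdd,
      LinearMap.comp_zero]
  obtain ⟨h, hh : h ∘ₗ d = t⟩ := (hM t).mp htd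
  obtain ⟨ψ, hψ⟩ := hdp.exists_desc_of_surjective hp (q := ℓ - f ∘ₗ h)
    (by rw [sub_comp, comp_assoc, hh, ht, sub_self])
  refine ⟨ψ, (cancel_right hp).mp ?_⟩
  rw [comp_assoc, hψ, comp_sub, hℓ, ← comp_assoc, hfg.linearMap_comp_eq_zero,
    LinearMap.zero_comp, sub_zero]

theorem exact_hom_of_exists_lift {E : Type v} [AddCommGroup E] [Module R E] [Small.{v} R]
    [Module.Injective R E] (hd : Function.Exact d' d) (hp : Function.Surjective p)
    (hdp : Function.Exact d p) {f : M →ₗ[R] E} (hf : Function.Injective f)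
    (hlift : ∀ φ : K →ₗ[R] E ⧸ range f, ∃ ψ : K →ₗ[R] E, (range f).mkQ ∘ₗ ψ = φ) :
    Function.Exact (fun h : P →ₗ[R] M => h ∘ₗ d) (fun t : X →ₗ[R] M => t ∘ₗ d') := by
  intro t
  refine ⟨fun (ht : t ∘ₗ d' = 0) => ?_, ?_⟩
  · obtain ⟨u, hu⟩ := Module.Injective.exists_comp_eq_of_exact hd
      (q := f ∘ₗ t) (by rw [comp_assoc, ht, LinearMap.comp_zero])
    obtain ⟨φ, hφ⟩ := hdp.exists_desc_of_surjective hp (q := (range f).mkQ ∘ₗ u)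
      (by rw [comp_assoc, hu, ← comp_assoc,
        (LinearMap.exact_map_mkQ_range f).linearMap_comp_eq_zero, LinearMap.zero_comp])
    obtain ⟨ψ, hψ⟩ := hlift φ
    obtain ⟨h, hh⟩ := (LinearMap.exact_map_mkQ_range f).exists_lift_of_injective hf
      (v := u - ψ ∘ₗ p) (by rw [comp_sub, ← hφ, ← comp_assoc, hψ, sub_self])
    refine ⟨h, (cancel_left hf).mp ?_⟩
    rw [← comp_assoc, hh, sub_comp, hu, comp_assoc, hdp.linearMap_comp_eq_zero,
      LinearMap.comp_zero, sub_zero]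
  · rintro ⟨h, rfl⟩
    show (h ∘ₗ d) ∘ₗ d' = 0
    rw [comp_assoc, hd.linearMap_comp_eq_zero, LinearMap.comp_zero]

end HomExactness

namespace NWeak

variable {R : Type u} [Ring R]

structure ResolutionData (U : ModuleCat.{u} R) where
  F : ℕ → ModuleCat.{u} R
  d : ∀ i, F (i + 1) ⟶ F i
  ε : F 0 ⟶ U
  projective : ∀ i, Module.Projective R (F i)
  surjective_ε : Function.Surjective ε
  exact_zero : Function.Exact (d 0) ε
  exact_succ : ∀ i, Function.Exact (d (i + 1)) (d i)

namespace ResolutionData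

variable {U : ModuleCat.{u} R} (D : ResolutionData U)

lemma d_comp_d (i : ℕ) : D.d (i + 1) ≫ D.d i = 0 :=
  ModuleCat.hom_ext (D.exact_succ i).linearMap_comp_eq_zero

def complex : ChainComplex (ModuleCat.{u} R) ℕ := ChainComplex.of D.F D.d D.d_comp_d

instance (i : ℕ) : Projective (D.complex.X i) :=
  (IsProjective.iff_projective (D.F i)).mp (D.projective i)

lemma complex_d (i : ℕ) : D.complex.d (i + 1) i = D.d i := by
  simp [complex, ChainComplex.of_d]

lemma complex_d_comp_ε : D.complex.d 1 0 ≫ D.ε = 0 := by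
  rw [D.complex_d 0]
  exact ModuleCat.hom_ext D.exact_zero.linearMap_comp_eq_zero

lemma complex_exactAt_succ (i : ℕ) : D.complex.ExactAt (i + 1) := by
  rw [HomologicalComplex.exactAt_iff' _ (i + 2) (i + 1) i (by simp) (by simp),
    ShortComplex.ShortExact.moduleCat_exact_iff_function_exact]
  change Function.Exact (D.complex.d (i + 2) (i + 1)) (D.complex.d (i + 1) i)
  rw [D.complex_d, D.complex_d]
  exact D.exact_succ i

def resolution : ProjectiveResolution U where
  complex := D.complex
  π := (ChainComplex.toSingle₀Equiv _ _).symm ⟨D.ε, D.complex_d_comp_ε⟩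
  quasiIso := ⟨fun n => by
    cases n with
    | zero =>
      rw [ChainComplex.quasiIsoAt₀_iff, ShortComplex.quasiIso_iff_of_zeros']
      · refine (ShortComplex.exact_and_epi_g_iff_of_iso
          ((ShortComplex.isoMk (Iso.refl _) (Iso.refl _) (Iso.refl _)
            (by simp) (by simp; rfl)) :
              _ ≅ ShortComplex.mk (D.complex.d 1 0) D.ε D.complex_d_comp_ε)).2 ⟨?_, ?_⟩
        · rw [ShortComplex.ShortExact.moduleCat_exact_iff_function_exact]
          change Function.Exact (D.complex.d 1 0) D.ε
          rw [D.complex_d]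
          exact D.exact_zero
        · exact (ModuleCat.epi_iff_surjective _).mpr D.surjective_ε
      all_goals rfl
    | succ n =>
      rw [quasiIsoAt_iff_exactAt']
      · exact D.complex_exactAt_succ n
      · apply ChainComplex.exactAt_succ_single_obj⟩

theorem extVanish_succ_iff (k : ℕ) (M : Type u) [AddCommGroup M] [Module R M] :
    extVanish R (k + 1) U M ↔
      Function.Exact (fun h : D.F k →ₗ[R] M => h ∘ₗ (D.d k).hom)
        (fun t : D.F (k + 1) →ₗ[R] M => t ∘ₗ (D.d (k + 1)).hom) := by
  let S := (D.resolution.complex.linearYonedaObj ℤ (ModuleCat.of R M)).sc' k (k + 1) (k + 2)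
  have hf (h : D.F k ⟶ ModuleCat.of R M) : S.f h = D.d k ≫ h := by
    change D.complex.d (k + 1) k ≫ h = _
    rw [D.complex_d]
    rfl
  have hg (t : D.F (k + 1) ⟶ ModuleCat.of R M) : S.g t = D.d (k + 1) ≫ t := by
    change D.complex.d (k + 2) (k + 1) ≫ t = _
    rw [D.complex_d]
    rfl
  have hdd : ∀ h : D.F k →ₗ[R] M, (h ∘ₗ (D.d k).hom) ∘ₗ (D.d (k + 1)).hom = 0 := fun h => by
    rw [LinearMap.comp_assoc, (D.exact_succ k).linearMap_comp_eq_zero, LinearMap.comp_zero]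
  rw [extVanish, ← ModuleCat.isZero_iff_subsingleton,
    ((D.resolution.isoExt (k + 1) (ModuleCat.of R M))).isZero_iff,
    ← HomologicalComplex.exactAt_iff_isZero_homology,
    HomologicalComplex.exactAt_iff' _ k (k + 1) (k + 2) (by simp) (by simp),
    ShortComplex.moduleCat_exact_iff]
  refine ⟨fun hex => .of_comp_of_mem_range (funext hdd) fun t ht => ?_, fun hex t ht => ?_⟩
  · obtain ⟨h, hh⟩ := hex (ModuleCat.ofHom t) ((hg _).trans (ModuleCat.hom_ext ht))
    exact ⟨h.hom, congrArg ModuleCat.Hom.hom ((hf h).symm.trans hh)⟩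
  · obtain ⟨h, hh⟩ := (hex t.hom).mp (congrArg ModuleCat.Hom.hom ((hg t).symm.trans ht))
    exact ⟨ModuleCat.ofHom h, (hf _).trans (ModuleCat.hom_ext hh)⟩

def syzygy : ℕ → ModuleCat.{u} R
  | 0 => U
  | m + 1 => ModuleCat.of R (LinearMap.range (D.d m).hom)

def toSyzygy : (n : ℕ) → D.F n →ₗ[R] D.syzygy n
  | 0 => D.ε.hom
  | m + 1 => (D.d m).hom.rangeRestrict

lemma surjective_toSyzygy : ∀ n, Function.Surjective (D.toSyzygy n)
  | 0 => D.surjective_ε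
  | m + 1 => (D.d m).hom.surjective_rangeRestrict

lemma exact_toSyzygy : ∀ n, Function.Exact (D.d n) (D.toSyzygy n)
  | 0 => D.exact_zero
  | m + 1 => LinearMap.exact_iff.mpr <|
    (LinearMap.ker_rangeRestrict _).trans (D.exact_succ m).linearMap_ker_eq

end ResolutionData

theorem IsNSuperFP.exists_resolutionData {n : ℕ} {U : ModuleCat.{u} R} (hU : IsNSuperFP R n U) :
    ∃ (D : ResolutionData U) (K : ModuleCat.{u} R) (p : D.F n →ₗ[R] K),
      IsSpecialSFP R n K ∧ Function.Surjective p ∧ Function.Exact (D.d n) p := by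
  obtain ⟨F, d, ε, hproj, hfin, hε, hex₀, hex⟩ := hU
  let D : ResolutionData U := ⟨F, d, ModuleCat.ofHom ε, hproj, hε, hex₀, hex⟩
  refine ⟨D, D.syzygy n, D.toSyzygy n, ⟨F, d, U, D.ε, hproj, hfin, hε, hex₀, hex, ?_⟩,
    D.surjective_toSyzygy n, D.exact_toSyzygy n⟩
  cases n <;> exact ⟨LinearEquiv.refl R _⟩

theorem IsSpecialSFP.exists_resolutionData {n : ℕ} {K : Type u} [AddCommGroup K] [Module R K]
    (hK : IsSpecialSFP R n K) :
    ∃ (U : ModuleCat.{u} R) (D : ResolutionData U) (p : D.F n →ₗ[R] K),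
      IsNSuperFP R n U ∧ Function.Surjective p ∧ Function.Exact (D.d n) p := by
  obtain ⟨F, d, U, ε, hproj, hfin, hε, hex₀, hex, hK⟩ := hK
  let D : ResolutionData U := ⟨F, d, ε, hproj, hε, hex₀, hex⟩
  obtain ⟨e⟩ : Nonempty (K ≃ₗ[R] D.syzygy n) := by cases n <;> exact hK
  exact ⟨U, D, e.symm ∘ₗ D.toSyzygy n, ⟨F, d, ε.hom, hproj, hfin, hε, hex₀, hex⟩,
    e.symm.surjective.comp (D.surjective_toSyzygy n),
    LinearEquiv.postcomp_exact_iff_exact.mpr (D.exact_toSyzygy n)⟩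

variable (R) in
/-- For a short exact sequence `0 → A → B →g C → 0`, exactness of `Hom_R(K, -)` for every special
super finitely presented `K` amounts to surjectivity of `Hom_R(K, B) → Hom_R(K, C)`. -/
def IsSpecialSuperpure (n : ℕ) {B C : Type*} [AddCommGroup B] [Module R B] [AddCommGroup C]
    [Module R C] (g : B →ₗ[R] C) : Prop :=
  ∀ (K : Type u) [AddCommGroup K] [Module R K], IsSpecialSFP R n K →
    ∀ φ : K →ₗ[R] C, ∃ ψ : K →ₗ[R] B, g.comp ψ = φ

variable {n : ℕ} {M : Type u} [AddCommGroup M] [Module R M]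

theorem IsNWeakInjective.isSpecialSuperpure (hM : IsNWeakInjective R n M) {B C : Type*}
    [AddCommGroup B] [Module R B] [AddCommGroup C] [Module R C] {f : M →ₗ[R] B}
    {g : B →ₗ[R] C} (hf : Function.Injective f) (hg : Function.Surjective g)
    (hfg : Function.Exact f g) : IsSpecialSuperpure R n g := by
  intro K _ _ hK φ
  obtain ⟨U, D, p, hU, hp, hdp⟩ := hK.exists_resolutionData
  have := D.projective n
  exact exists_lift_of_exact_hom (D.exact_succ n).linearMap_comp_eq_zero hp hdp
    ((D.extVanish_succ_iff n M).mp (hM U hU)) hf hg hfg φ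

theorem IsNWeakInjective.of_isSpecialSuperpure_mkQ {E : Type u} [AddCommGroup E] [Module R E]
    [Module.Injective R E] {f : M →ₗ[R] E} (hf : Function.Injective f)
    (h : IsSpecialSuperpure R n (LinearMap.range f).mkQ) : IsNWeakInjective R n M := by
  intro U hU
  obtain ⟨D, K, p, hK, hp, hdp⟩ := hU.exists_resolutionData
  exact (D.extVanish_succ_iff n M).mpr
    (exact_hom_of_exists_lift (D.exact_succ n) hp hdp hf (h K hK))

end NWeak

open NWeak in
/-- For a left `R`-module `M`, the following are equivalent:
(1) `M` is `n`-weak injective;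
(2) for every short exact sequence `0 → M → B → C → 0` and every special super finitely
presented module `K`, the induced map `Hom_R(K, B) → Hom_R(K, C)` is surjective;
(3) for every embedding of `M` into an injective module `E` and every special super
finitely presented `K`, the induced map `Hom_R(K, E) → Hom_R(K, E/M)` is surjective. -/
theorem isNWeakInjective_iff_superpure
    (R : Type u) [Ring R] (n : ℕ) (M : Type u) [AddCommGroup M] [Module R M] :
    (IsNWeakInjective R n M ↔
      (∀ (B C : Type u) [AddCommGroup B] [Module R B] [AddCommGroup C] [Module R C]
        (f : M →ₗ[R] B) (g : B →ₗ[R] C),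
        Function.Injective f → Function.Surjective g → Function.Exact f g →
        ∀ (K : Type u) [AddCommGroup K] [Module R K], IsSpecialSFP R n K →
          ∀ φ : K →ₗ[R] C, ∃ ψ : K →ₗ[R] B, g.comp ψ = φ)) ∧
    (IsNWeakInjective R n M ↔
      (∀ (E : Type u) [AddCommGroup E] [Module R E],
        CategoryTheory.Injective (ModuleCat.of R E) →
        ∀ f : M →ₗ[R] E, Function.Injective f →
        ∀ (K : Type u) [AddCommGroup K] [Module R K], IsSpecialSFP R n K →
          ∀ φ : K →ₗ[R] (E ⧸ LinearMap.range f), ∃ ψ : K →ₗ[R] E,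
            (LinearMap.range f).mkQ.comp ψ = φ)) := by
  have h31 (h3 : ∀ (E : Type u) [AddCommGroup E] [Module R E],
      Injective (ModuleCat.of R E) → ∀ f : M →ₗ[R] E, Function.Injective f →
        IsSpecialSuperpure R n (LinearMap.range f).mkQ) : IsNWeakInjective R n M := by
    let I := Injective.under (ModuleCat.of R M)
    have hI : Injective (ModuleCat.of R I) := inferInstanceAs (Injective I)
    have : Module.Injective R I := Module.injective_module_of_injective_object R I
    have hι := (ModuleCat.mono_iff_injective (Injective.ι (ModuleCat.of R M))).mp inferInstance
    exact .of_isSpecialSuperpure_mkQ hι (h3 I hI _ hι)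
  refine ⟨⟨fun h1 _ _ _ _ _ _ _ _ hf hg hfg => h1.isSpecialSuperpure hf hg hfg, fun h2 => ?_⟩,
    ⟨fun h1 _ _ _ _ f hf => h1.isSpecialSuperpure hf (Submodule.mkQ_surjective _)
      (LinearMap.exact_map_mkQ_range f), h31⟩⟩
  exact h31 fun _ _ _ _ f hf =>
    h2 _ _ f _ hf (Submodule.mkQ_surjective _) (LinearMap.exact_map_mkQ_range f)
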